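/- Suppose any quantum circuit with L two-qubit gates can be simulated by an adiabatic computation whose output is ε-close in ℓ₂-norm to the circuit's history state |η⟩ = (1/√(L'+1)) Σ_ℓ |α(ℓ)⟩⊗|clock_ℓ⟩. If a circuit with L gates is padded with (2/ε − 1)L identity gates (total L' = 2L/ε gates), then tracing out the clock register of its history state yields a density matrix that is ε/2-close in trace distance to |α(L)⟩⟨α(L)|, the final state of the original circuit; consequently the adiabatic output, after tracing out the clock, is ε-close in trace distance to the circuit's final state. -/

import Mathlib

open scoped ComplexOrder

/-! Padding a circuit with identity gates concentrates the history state on the final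
state: if the last `L' - L` gates are identities and `L' ≥ 2L/ε`, then tracing out the
clock register of the history state gives a density matrix `ε/2`-close in trace
distance to the final state of the circuit, and consequently the adiabatic output
(which is `ε/2`-close in `ℓ₂`-norm to the history state) yields, after tracing out the
clock, a state `ε`-close in trace distance to the circuit's final state. -/

/-- The trace norm `‖A‖₁ = tr √(A† A)` of a complex square matrix. -/
noncomputable def traceNorm {m : Type*} [Fintype m] [DecidableEq m]
    (A : Matrix m m ℂ) : ℝ :=
  (((Matrix.posSemidef_conjTranspose_mul_self A).1.eigenvectorUnitary : Matrix m m ℂ) *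
      Matrix.diagonal (((↑) : ℝ → ℂ) ∘ Real.sqrt ∘ (Matrix.posSemidef_conjTranspose_mul_self A).1.eigenvalues) *
      (star (Matrix.posSemidef_conjTranspose_mul_self A).1.eigenvectorUnitary : Matrix m m ℂ)).trace.re

/-- Trace distance `(1/2)·‖ρ - σ‖₁`. -/
noncomputable def traceDist {m : Type*} [Fintype m] [DecidableEq m]
    (ρ σ : Matrix m m ℂ) : ℝ :=
  traceNorm (ρ - σ) / 2

/-- Partial trace over the clock (second) register. -/
noncomputable def ptraceClock {X C : Type*} [Fintype C]
    (ρ : Matrix (X × C) (X × C) ℂ) : Matrix X X ℂ :=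
  Matrix.of fun x y => ∑ c : C, ρ (x, c) (y, c)

/-- The rank-one density matrix `|v⟩⟨v|` of a vector `v`. -/
noncomputable def densityOf {X : Type*} (v : X → ℂ) : Matrix X X ℂ :=
  Matrix.vecMulVec v (star v)

/-- The unary clock state `|1^ℓ 0^(L-ℓ)⟩`. -/
def clk (L : ℕ) (ℓ : ℕ) : Fin L → Bool := fun j => decide ((j : ℕ) < ℓ)

/-! For Hermitian `A`, `‖A‖₁ = ∑ |λᵢ|` is the maximum of `Re tr (U A)` over unitaries `U`
(attained at `U = sign A`), so every trace-norm bound reduces to bounding `Re tr (U A)`; for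
rank-one terms this is Cauchy–Schwarz, `|tr (U |a⟩⟨b|)| = |⟪b, U a⟫| ≤ ‖a‖ ‖b‖`. Since the clock
states are orthonormal, tracing out the clock of the history state leaves the uniform mixture
`(L'+1)⁻¹ ∑ |α(ℓ)⟩⟨α(ℓ)|`, which differs from `|α(L)⟩⟨α(L)|` only in the `L` unpadded terms, each
of trace norm at most `2`: hence the bound `2L/(L'+1) ≤ ε`. For the adiabatic output,
`|ψ⟩⟨ψ| - |η⟩⟨η| = |ψ⟩⟨ψ - η| + |ψ - η⟩⟨η|` has trace norm at most `2 ‖ψ - η‖ ≤ ε`, the partial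
trace does not increase the trace norm (`tr (U · ptrace M) = tr ((U ⊗ 1) M)`), and the triangle
inequality finishes. -/

open Matrix

local notation "‖" v "‖₂" => ‖(WithLp.toLp 2 v : EuclideanSpace ℂ _)‖

section TraceNorm

variable {m : Type*} [Fintype m] [DecidableEq m]

lemma Matrix.trace_conjStarAlgAut (u : unitary (Matrix m m ℂ)) (M : Matrix m m ℂ) :
    (Unitary.conjStarAlgAut ℂ _ u M).trace = M.trace := by
  rw [Unitary.conjStarAlgAut_apply, trace_mul_cycle, Unitary.coe_star_mul_self, one_mul]

lemma traceNorm_eq_sum_abs_eigenvalues {A : Matrix m m ℂ} (hA : A.IsHermitian) :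
    traceNorm A = ∑ i, |hA.eigenvalues i| := by
  have hsqrt : cfc Real.sqrt (Aᴴ * A) = cfc (fun x : ℝ => |x|) A := by
    rw [hA.eq, ← sq, ← cfc_comp_pow Real.sqrt 2 A (ha := hA.isSelfAdjoint)]
    simp_rw [Real.sqrt_sq_eq_abs]
  have hdef : traceNorm A = (cfc Real.sqrt (Aᴴ * A)).trace.re := by
    rw [(posSemidef_conjTranspose_mul_self A).1.cfc_eq]
    rfl
  rw [hdef, hsqrt, hA.cfc_eq, IsHermitian.cfc, Matrix.trace_conjStarAlgAut, trace_diagonal,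
    Complex.re_sum]
  rfl

lemma re_trace_mul_le_traceNorm {A U : Matrix m m ℂ} (hA : A.IsHermitian)
    (hU : U ∈ unitary (Matrix m m ℂ)) : (U * A).trace.re ≤ traceNorm A := by
  set V := hA.eigenvectorUnitary
  set W := (star V : Matrix m m ℂ) * U * V
  have hW : W ∈ unitaryGroup m ℂ := mul_mem (mul_mem (star V).2 hU) V.2
  have htr : (U * A).trace = ∑ i, W i i * hA.eigenvalues i := by
    conv_lhs => rw [hA.spectral_theorem, Unitary.conjStarAlgAut_apply, ← mul_assoc, ← mul_assoc,
      trace_mul_cycle, ← mul_assoc]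
    simp only [trace, diag_apply, mul_diagonal, Function.comp_apply, W]
    rfl
  rw [htr, Complex.re_sum, traceNorm_eq_sum_abs_eigenvalues hA]
  gcongr with i
  calc (W i i * hA.eigenvalues i).re ≤ ‖W i i * hA.eigenvalues i‖ := Complex.re_le_norm _
    _ ≤ 1 * |hA.eigenvalues i| := by
        rw [norm_mul, Complex.norm_real, Real.norm_eq_abs]
        gcongr
        exact entry_norm_bound_of_unitary hW i i
    _ = |hA.eigenvalues i| := one_mul _

lemma exists_mem_unitary_re_trace_mul_eq_traceNorm {A : Matrix m m ℂ} (hA : A.IsHermitian) :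
    ∃ S ∈ unitary (Matrix m m ℂ), (S * A).trace.re = traceNorm A := by
  let sign : m → ℂ := fun i => if 0 ≤ hA.eigenvalues i then 1 else -1
  have hsign : star (diagonal sign) * diagonal sign = 1 ∧
      diagonal sign * star (diagonal sign) = 1 := by
    simp only [star_eq_conjTranspose, diagonal_conjTranspose, diagonal_mul_diagonal,
      ← diagonal_one]
    constructor <;> congr 1 <;> funext i <;> by_cases h : 0 ≤ hA.eigenvalues i <;> simp [sign, h]
  let conj := Unitary.conjStarAlgAut ℂ (Matrix m m ℂ) hA.eigenvectorUnitary
  refine ⟨conj (diagonal sign), Unitary.map_mem conj (Unitary.mem_iff.mpr hsign), ?_⟩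
  rw [traceNorm_eq_sum_abs_eigenvalues hA]
  conv_lhs => rw [hA.spectral_theorem]
  rw [← map_mul, Matrix.trace_conjStarAlgAut, diagonal_mul_diagonal, trace_diagonal,
    Complex.re_sum]
  refine Finset.sum_congr rfl fun i _ => ?_
  by_cases h : 0 ≤ hA.eigenvalues i
  · simp [sign, h, abs_of_nonneg h]
  · simp [sign, h, abs_of_neg (not_le.mp h)]

lemma traceNorm_le_of_forall_unitary {A : Matrix m m ℂ} (hA : A.IsHermitian) {c : ℝ}
    (h : ∀ U ∈ unitary (Matrix m m ℂ), (U * A).trace.re ≤ c) : traceNorm A ≤ c := by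
  obtain ⟨S, hS, hSA⟩ := exists_mem_unitary_re_trace_mul_eq_traceNorm hA
  exact hSA ▸ h S hS

lemma traceNorm_add_le {A B : Matrix m m ℂ} (hA : A.IsHermitian) (hB : B.IsHermitian) :
    traceNorm (A + B) ≤ traceNorm A + traceNorm B :=
  traceNorm_le_of_forall_unitary (hA.add hB) fun U hU => by
    rw [mul_add, trace_add, Complex.add_re]
    exact add_le_add (re_trace_mul_le_traceNorm hA hU) (re_trace_mul_le_traceNorm hB hU)

lemma traceNorm_sum_le {ι : Type*} (s : Finset ι) {A : ι → Matrix m m ℂ}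
    (hA : ∀ i ∈ s, (A i).IsHermitian) : traceNorm (∑ i ∈ s, A i) ≤ ∑ i ∈ s, traceNorm (A i) :=
  traceNorm_le_of_forall_unitary (isSelfAdjoint_sum s hA) fun U hU => by
    rw [Finset.mul_sum, trace_sum, Complex.re_sum]
    exact Finset.sum_le_sum fun i hi => re_trace_mul_le_traceNorm (hA i hi) hU

lemma traceNorm_real_smul_le {A : Matrix m m ℂ} (hA : A.IsHermitian) {c : ℝ} (hc : 0 ≤ c) :
    traceNorm ((c : ℂ) • A) ≤ c * traceNorm A :=
  traceNorm_le_of_forall_unitary (hA.smul (by simp [IsSelfAdjoint])) fun U hU => by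
    rw [mul_smul_comm, trace_smul, smul_eq_mul, Complex.re_ofReal_mul]
    exact mul_le_mul_of_nonneg_left (re_trace_mul_le_traceNorm hA hU) hc

lemma traceDist_triangle {ρ σ τ : Matrix m m ℂ} (hρ : ρ.IsHermitian) (hσ : σ.IsHermitian)
    (hτ : τ.IsHermitian) : traceDist ρ τ ≤ traceDist ρ σ + traceDist σ τ := by
  have := traceNorm_add_le (hρ.sub hσ) (hσ.sub hτ)
  rw [sub_add_sub_cancel] at this
  unfold traceDist
  linarith

end TraceNorm

section DensityMatrix

open scoped InnerProductSpace

variable {X : Type*}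

lemma densityOf_isHermitian (v : X → ℂ) : (densityOf v).IsHermitian := by
  simp [densityOf, IsHermitian, conjTranspose_vecMulVec]

lemma densityOf_smul (c : ℂ) (v : X → ℂ) : densityOf (c • v) = (c * star c) • densityOf v := by
  rw [densityOf, densityOf, star_smul, smul_vecMulVec, vecMulVec_smul, smul_smul]

lemma densityOf_sub_densityOf (a b : X → ℂ) :
    densityOf a - densityOf b = vecMulVec a (star (a - b)) + vecMulVec (a - b) (star b) := by
  simp only [densityOf, star_sub, vecMulVec_sub, sub_vecMulVec]
  abel

lemma trace_densityOf [Fintype X] (v : X → ℂ) : (densityOf v).trace = (‖v‖₂ : ℂ) ^ 2 := by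
  rw [densityOf, trace_vecMulVec, ← EuclideanSpace.inner_toLp_toLp, inner_self_eq_norm_sq_to_K]
  rfl

variable [Fintype X] [DecidableEq X]

lemma norm_trace_mul_vecMulVec_le {U : Matrix X X ℂ} (hU : U ∈ unitary (Matrix X X ℂ))
    (a b : X → ℂ) : ‖(U * vecMulVec a (star b)).trace‖ ≤ ‖a‖₂ * ‖b‖₂ := by
  have hU' : toEuclideanCLM (n := X) (𝕜 := ℂ) U ∈ unitary _ := Unitary.map_mem _ hU
  have htr : (U * vecMulVec a (star b)).trace =
      ⟪(WithLp.toLp 2 b : EuclideanSpace ℂ X), toEuclideanCLM (n := X) (𝕜 := ℂ) U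
        (WithLp.toLp 2 a)⟫_ℂ := by
    rw [mul_vecMulVec, trace_vecMulVec]
    rfl
  rw [htr, mul_comm]
  refine (norm_inner_le_norm _ _).trans_eq ?_
  rw [ContinuousLinearMap.norm_map_of_mem_unitary hU']

lemma traceNorm_densityOf_sub_le (a b : X → ℂ) :
    traceNorm (densityOf a - densityOf b) ≤ (‖a‖₂ + ‖b‖₂) * ‖a - b‖₂ := by
  refine traceNorm_le_of_forall_unitary ((densityOf_isHermitian a).sub (densityOf_isHermitian b))
    fun U hU => ?_
  rw [densityOf_sub_densityOf, mul_add, trace_add]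
  refine (Complex.re_le_norm _).trans ((norm_add_le _ _).trans ?_)
  have h₁ := norm_trace_mul_vecMulVec_le hU a (a - b)
  have h₂ := norm_trace_mul_vecMulVec_le hU (a - b) b
  rw [WithLp.toLp_sub] at h₁ h₂ ⊢
  linarith

lemma traceNorm_densityOf_sub_le_add (a b : X → ℂ) :
    traceNorm (densityOf a - densityOf b) ≤ ‖a‖₂ ^ 2 + ‖b‖₂ ^ 2 := by
  refine traceNorm_le_of_forall_unitary ((densityOf_isHermitian a).sub (densityOf_isHermitian b))
    fun U hU => ?_
  rw [mul_sub, trace_sub, Complex.sub_re, sq, sq]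
  have h₁ := (Complex.abs_re_le_norm _).trans (norm_trace_mul_vecMulVec_le hU a a)
  have h₂ := (Complex.abs_re_le_norm _).trans (norm_trace_mul_vecMulVec_le hU b b)
  rw [densityOf, densityOf]
  linarith [abs_le.mp h₁, abs_le.mp h₂]

end DensityMatrix

section PartialTrace

open scoped Kronecker

variable {X C : Type*} [Fintype C]

lemma ptraceClock_sub (M N : Matrix (X × C) (X × C) ℂ) :
    ptraceClock (M - N) = ptraceClock M - ptraceClock N := by
  ext x y
  simp [ptraceClock]

lemma ptraceClock_smul (c : ℂ) (M : Matrix (X × C) (X × C) ℂ) :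
    ptraceClock (c • M) = c • ptraceClock M := by
  ext x y
  simp [ptraceClock, Finset.mul_sum]

lemma ptraceClock_isHermitian {M : Matrix (X × C) (X × C) ℂ} (hM : M.IsHermitian) :
    (ptraceClock M).IsHermitian := by
  ext x y
  simp only [ptraceClock, conjTranspose_apply, of_apply, star_sum]
  exact Finset.sum_congr rfl fun c _ => congrFun (congrFun hM _) _

variable [Fintype X] [DecidableEq C]

lemma trace_mul_ptraceClock (B : Matrix X X ℂ) (M : Matrix (X × C) (X × C) ℂ) :
    (B * ptraceClock M).trace = ((B ⊗ₖ 1) * M).trace := by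
  simp only [trace, diag, mul_apply, ptraceClock, of_apply, kroneckerMap_apply, one_apply,
    Fintype.sum_prod_type, Finset.mul_sum, mul_ite, mul_one, mul_zero, ite_mul, zero_mul,
    Finset.sum_ite_eq, Finset.mem_univ, if_true]
  exact Finset.sum_congr rfl fun x _ => Finset.sum_comm

variable [DecidableEq X]

lemma trace_ptraceClock (M : Matrix (X × C) (X × C) ℂ) : (ptraceClock M).trace = M.trace := by
  simpa [one_kronecker_one] using trace_mul_ptraceClock 1 M

lemma traceNorm_ptraceClock_le {M : Matrix (X × C) (X × C) ℂ} (hM : M.IsHermitian) :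
    traceNorm (ptraceClock M) ≤ traceNorm M :=
  traceNorm_le_of_forall_unitary (ptraceClock_isHermitian hM) fun U hU => by
    rw [trace_mul_ptraceClock]
    exact re_trace_mul_le_traceNorm hM (kronecker_mem_unitary hU (one_mem _))

end PartialTrace

section HistoryState

variable {X : Type*}

noncomputable def historyState (N : ℕ) (α : ℕ → X → ℂ) : X × (Fin N → Bool) → ℂ :=
  fun p => ((1 / Real.sqrt (N + 1) : ℝ) : ℂ) *
    ∑ ℓ ∈ Finset.range (N + 1), if p.2 = clk N ℓ then α ℓ p.1 else 0

lemma clk_injOn (N : ℕ) : Set.InjOn (clk N) (Finset.range (N + 1)) := by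
  intro a ha b hb h
  by_contra hne
  wlog hab : a < b generalizing a b
  · exact this hb ha h.symm (Ne.symm hne) (by omega)
  have := congrFun h ⟨a, by simp only [Finset.coe_range, Set.mem_Iio] at hb; omega⟩
  simp only [clk, lt_self_iff_false, decide_false, false_eq_decide_iff, not_lt] at this
  omega

lemma ptraceClock_densityOf_sum_ite {ι C : Type*} [Fintype C] [DecidableEq C] {s : Finset ι}
    {c : ι → C} (hc : Set.InjOn c s) (v : ι → X → ℂ) :
    ptraceClock (densityOf fun p : X × C => ∑ i ∈ s, if p.2 = c i then v i p.1 else 0) =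
      ∑ i ∈ s, densityOf (v i) := by
  ext x y
  have hsingle : ∀ i ∈ s, ∑ j ∈ s, star (if c i = c j then v j y else 0) = star (v i y) :=
    fun i hi => by
      rw [Finset.sum_eq_single_of_mem i hi fun j hj hji => by
        rw [if_neg fun h => hji (hc hj hi h.symm), star_zero], if_pos rfl]
  simp only [ptraceClock, densityOf, of_apply, vecMulVec_apply, Pi.star_apply, star_sum,
    Finset.sum_mul, ite_mul, zero_mul, Matrix.sum_apply]
  rw [Finset.sum_comm]
  refine Finset.sum_congr rfl fun i hi => ?_
  rw [Finset.sum_ite_eq', if_pos (Finset.mem_univ _), hsingle i hi]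

lemma ptraceClock_densityOf_historyState (N : ℕ) (α : ℕ → X → ℂ) :
    ptraceClock (densityOf (historyState N α)) =
      (((N + 1 : ℝ)⁻¹ : ℝ) : ℂ) • ∑ ℓ ∈ Finset.range (N + 1), densityOf (α ℓ) := by
  have hscale : ((1 / Real.sqrt (N + 1) : ℝ) : ℂ) * star ((1 / Real.sqrt (N + 1) : ℝ) : ℂ) =
      (((N + 1 : ℝ)⁻¹ : ℝ) : ℂ) := by
    rw [Complex.star_def, Complex.conj_ofReal, ← Complex.ofReal_mul, div_mul_div_comm, one_mul,
      Real.mul_self_sqrt (by positivity), one_div]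
  have hsmul : historyState N α = ((1 / Real.sqrt (N + 1) : ℝ) : ℂ) •
      fun p => ∑ ℓ ∈ Finset.range (N + 1), if p.2 = clk N ℓ then α ℓ p.1 else 0 := rfl
  rw [hsmul, densityOf_smul, ptraceClock_smul, ptraceClock_densityOf_sum_ite (clk_injOn N),
    hscale]

variable [Fintype X] [DecidableEq X]

lemma norm_historyState {N : ℕ} {α : ℕ → X → ℂ} (hα : ∀ ℓ ≤ N, ‖α ℓ‖₂ = 1) :
    ‖historyState N α‖₂ = 1 := by
  have hsq : ((‖historyState N α‖₂ ^ 2 : ℝ) : ℂ) = 1 := by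
    push_cast
    rw [← trace_densityOf, ← trace_ptraceClock, ptraceClock_densityOf_historyState, trace_smul,
      trace_sum, Finset.sum_congr rfl fun ℓ hℓ => by
        rw [trace_densityOf, hα ℓ (Finset.mem_range_succ_iff.mp hℓ)]]
    simp only [Complex.ofReal_inv, Complex.ofReal_add, Complex.ofReal_natCast,
      Complex.ofReal_one, one_pow, Finset.sum_const, Finset.card_range, nsmul_eq_mul,
      Nat.cast_add, Nat.cast_one, mul_one, smul_eq_mul]
    exact inv_mul_cancel₀ (Nat.cast_add_one_ne_zero N)
  exact (pow_eq_one_iff_of_nonneg (norm_nonneg _) two_ne_zero).mp (by exact_mod_cast hsq)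

lemma traceNorm_average_sub_densityOf_le {N L : ℕ} (hLN : L ≤ N) {α : ℕ → X → ℂ}
    (hα : ∀ ℓ ≤ N, ‖α ℓ‖₂ = 1) (hpad : ∀ ℓ, L ≤ ℓ → ℓ ≤ N → α ℓ = α L) :
    traceNorm ((((N + 1 : ℝ)⁻¹ : ℝ) : ℂ) • ∑ ℓ ∈ Finset.range (N + 1), densityOf (α ℓ) -
      densityOf (α L)) ≤ 2 * L / (N + 1) := by
  have hvanish : ∑ ℓ ∈ Finset.range (N + 1), (densityOf (α ℓ) - densityOf (α L)) =
      ∑ ℓ ∈ Finset.range L, (densityOf (α ℓ) - densityOf (α L)) := by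
    refine (Finset.sum_subset (Finset.range_subset_range.mpr (by omega)) fun ℓ hℓ hℓL => ?_).symm
    simp only [Finset.mem_range] at hℓ hℓL
    rw [hpad ℓ (by omega) (by omega), sub_self]
  have hmix : (((N + 1 : ℝ)⁻¹ : ℝ) : ℂ) • ∑ ℓ ∈ Finset.range (N + 1), densityOf (α ℓ) -
      densityOf (α L) = (((N + 1 : ℝ)⁻¹ : ℝ) : ℂ) •
        ∑ ℓ ∈ Finset.range L, (densityOf (α ℓ) - densityOf (α L)) := by
    rw [← hvanish, Finset.sum_sub_distrib, smul_sub, Finset.sum_const, Finset.card_range,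
      ← Nat.cast_smul_eq_nsmul ℂ, smul_smul]
    push_cast
    rw [inv_mul_cancel₀ (Nat.cast_add_one_ne_zero N), one_smul]
  have hherm : ∀ ℓ ∈ Finset.range L, (densityOf (α ℓ) - densityOf (α L)).IsHermitian :=
    fun ℓ _ => (densityOf_isHermitian _).sub (densityOf_isHermitian _)
  have hterm : ∀ ℓ ∈ Finset.range L, traceNorm (densityOf (α ℓ) - densityOf (α L)) ≤ 2 := by
    intro ℓ hℓ
    have := traceNorm_densityOf_sub_le_add (α ℓ) (α L)
    rw [hα ℓ (by simp at hℓ; omega), hα L hLN] at this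
    norm_num at this
    exact this
  rw [hmix]
  calc _ ≤ (N + 1 : ℝ)⁻¹ * traceNorm (∑ ℓ ∈ Finset.range L,
          (densityOf (α ℓ) - densityOf (α L))) :=
        traceNorm_real_smul_le (isSelfAdjoint_sum _ hherm) (by positivity)
    _ ≤ (N + 1 : ℝ)⁻¹ * ∑ ℓ ∈ Finset.range L, 2 := by
        gcongr
        exact (traceNorm_sum_le _ hherm).trans (Finset.sum_le_sum hterm)
    _ = 2 * L / (N + 1) := by
        rw [Finset.sum_const, Finset.card_range, nsmul_eq_mul]
        ring

end HistoryState

theorem padded_history_state_close_to_output (n L L' : ℕ) (ε : ℝ) (hε : 0 < ε)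
    (hLL' : L ≤ L') (hL' : 2 * (L : ℝ) / ε ≤ (L' : ℝ))
    (α : ℕ → (Fin n → Bool) → ℂ)
    (hunit : ∀ ℓ, ℓ ≤ L' → ∑ x : Fin n → Bool, ‖α ℓ x‖ ^ 2 = 1)
    (hpad : ∀ ℓ, L ≤ ℓ → ℓ ≤ L' → α ℓ = α L)
    (η : (Fin n → Bool) × (Fin L' → Bool) → ℂ)
    (hη : η = fun p => ((1 / Real.sqrt (L' + 1) : ℝ) : ℂ) *
      ∑ ℓ ∈ Finset.range (L' + 1), if p.2 = clk L' ℓ then α ℓ p.1 else 0)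
    (ψ : (Fin n → Bool) × (Fin L' → Bool) → ℂ)
    (hψunit : ∑ p : (Fin n → Bool) × (Fin L' → Bool), ‖ψ p‖ ^ 2 = 1)
    (hψη : Real.sqrt (∑ p : (Fin n → Bool) × (Fin L' → Bool), ‖ψ p - η p‖ ^ 2) ≤ ε / 2) :
    traceDist (ptraceClock (densityOf η)) (densityOf (α L)) ≤ ε / 2 ∧
    traceDist (ptraceClock (densityOf ψ)) (densityOf (α L)) ≤ ε := by
  replace hη : η = historyState L' α := hη
  have hα : ∀ ℓ ≤ L', ‖α ℓ‖₂ = 1 := fun ℓ hℓ => by simp [EuclideanSpace.norm_eq, hunit ℓ hℓ]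
  have hψ : ‖ψ‖₂ = 1 := by simp [EuclideanSpace.norm_eq, hψunit]
  have hηunit : ‖η‖₂ = 1 := by rw [hη]; exact norm_historyState hα
  replace hψη : ‖ψ - η‖₂ ≤ ε / 2 := by simpa [EuclideanSpace.norm_eq] using hψη
  have hhistory : traceNorm (ptraceClock (densityOf η) - densityOf (α L)) ≤ ε := by
    rw [hη, ptraceClock_densityOf_historyState]
    refine (traceNorm_average_sub_densityOf_le hLL' hα hpad).trans ?_
    rw [div_le_iff₀ hε] at hL'
    rw [div_le_iff₀ (by positivity)]
    linarith
  have hadiabatic : traceNorm (ptraceClock (densityOf ψ) - ptraceClock (densityOf η)) ≤ ε := by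
    rw [← ptraceClock_sub]
    refine (traceNorm_ptraceClock_le
      ((densityOf_isHermitian ψ).sub (densityOf_isHermitian η))).trans
        ((traceNorm_densityOf_sub_le ψ η).trans ?_)
    rw [hψ, hηunit]
    linarith
  have hherm : ∀ v : (Fin n → Bool) × (Fin L' → Bool) → ℂ,
      (ptraceClock (densityOf v)).IsHermitian :=
    fun v => ptraceClock_isHermitian (densityOf_isHermitian v)
  refine ⟨by unfold traceDist; linarith, ?_⟩
  calc _ ≤ traceDist (ptraceClock (densityOf ψ)) (ptraceClock (densityOf η)) +
        traceDist (ptraceClock (densityOf η)) (densityOf (α L)) :=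
        traceDist_triangle (hherm ψ) (hherm η) (densityOf_isHermitian _)
    _ ≤ ε := by unfold traceDist; linarith
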